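/- arXiv:2008.03751 — 2 statements merged into one kernel-verified Lean document; each statement's English description precedes it below -/
import Mathlib

section
/- Let ω < 0, 0 < α ≤ 1 and 0 < αγ ≤ β ≤ 1. Let λ₀ ∈ ℂ with λ₀ ≠ 0 and λ₀ not in the closure of Ψ ∪ Ψ̄, where Ψ = {Λ(θ) : θ ∈ (0, απ/2)} and Ψ̄ its complex-conjugate set. Then there exists r > 0 such that for every λ ∈ ℂ with |λ − λ₀| < r, the number of roots s with Re(s) ≥ 0 of the equation F(s) = λ, counted with multiplicity (multiplicity being the order of vanishing of the analytic function s ↦ F(s) − λ at the root), equals the corresponding number for λ₀. In particular, the unstable-root count is constant on each connected component of ℂ \ closure(Ψ ∪ Ψ̄). -/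
open Real Complex Filter Set Topology

/-- The curve parametrization Λ(θ) bounding the stability region. -/
noncomputable def Lam (α β γ ω : ℝ) (θ : ℝ) : ℂ :=
  ((|ω| ^ (β / α) * Real.sin θ ^ (β / α - γ) * Real.sin (α * π / 2) ^ γ *
      Real.sin (α * π / 2 - θ) ^ (-(β / α)) : ℝ) : ℂ) *
    Complex.exp (Complex.I * ((γ * θ + (β - α * γ) * π / 2 : ℝ) : ℂ))

/-- The characteristic function F(s) = s^(β-αγ) (s^α - ω)^γ (principal branches). -/
noncomputable def Fc (α β γ ω : ℝ) (s : ℂ) : ℂ :=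
  s ^ ((β - α * γ : ℝ) : ℂ) * (s ^ ((α : ℝ) : ℂ) - (ω : ℂ)) ^ ((γ : ℝ) : ℂ)

/-- μ(θ) = (|ω| sin θ / sin(απ/2 - θ))^(1/α). -/
noncomputable def muP (α ω : ℝ) (θ : ℝ) : ℝ :=
  (|ω| * Real.sin θ / Real.sin (α * π / 2 - θ)) ^ (1 / α)

/-- ρ(θ) = |ω| sin(απ/2) / sin(απ/2 - θ). -/
noncomputable def rhoP (α ω : ℝ) (θ : ℝ) : ℝ :=
  |ω| * Real.sin (α * π / 2) / Real.sin (α * π / 2 - θ)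

/-- The curve Ψ = Λ((0, απ/2)). -/
noncomputable def PsiSet (α β γ ω : ℝ) : Set ℂ :=
  Lam α β γ ω '' Set.Ioo 0 (α * π / 2)

/-- The complex conjugate curve Ψ̄. -/
noncomputable def PsiBar (α β γ ω : ℝ) : Set ℂ :=
  {z : ℂ | (starRingEnd ℂ) z ∈ PsiSet α β γ ω}

open scoped Classical in
/-- Multiplicity of a root: the analytic order of vanishing of s ↦ F(s) - λ. -/
noncomputable def multAt (α β γ ω : ℝ) (lam s : ℂ) : ℕ∞ :=
  if h : AnalyticAt ℂ (fun z => Fc α β γ ω z - lam) s then analyticOrderAt (fun z => Fc α β γ ω z - lam) s else 0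

/-- Number of unstable roots (Re s ≥ 0) of F(s) = λ, counted with multiplicity. -/
noncomputable def Ncount (α β γ ω : ℝ) (lam : ℂ) : ℕ∞ :=
  ∑' s : {s : ℂ // 0 ≤ s.re ∧ Fc α β γ ω s = lam}, multAt α β γ ω lam (s : ℂ)

/-!
When `λ ∉ closure (Ψ ∪ Ψ̄)`, every root of `F(s) = λ` with `Re s ≥ 0` is simple and lies in the
open right half-plane. On the imaginary axis, `F(iy)` is a point of `Ψ`: writing
`w = (iy)^α - ω`, the sine rule in the triangle `0, -ω, w` gives `F(iy) = Λ(arg w)`; by symmetry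
`F(-iy) ∈ Ψ̄`, and `F(0)` is a limit of points `F(iy)`. In the open half-plane,
`F'(s) = F(s) (β s^α - (β - αγ) ω) / (s (s^α - ω))`, and `β s^α - (β - αγ) ω` has positive real
part. Since moreover `‖F(s)‖ ≥ ‖s‖^β`, for `λ` near `λ₀` all these roots lie in one compact
half-disc, near each root `F` is a local homeomorphism, and a compactness argument shows that the
number of roots in the half-disc does not change under small perturbations of `λ`.
-/

open ComplexConjugate

theorem isLocalHomeomorphOn_of_hasStrictDerivAt {𝕜 : Type*} [NontriviallyNormedField 𝕜]
    [CompleteSpace 𝕜] {f : 𝕜 → 𝕜} {s : Set 𝕜}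
    (hf : ∀ x ∈ s, ∃ f' ≠ 0, HasStrictDerivAt f f' x) : IsLocalHomeomorphOn f s := by
  intro x hx
  obtain ⟨f', hf', hx'⟩ := hf x hx
  have h := hx'.hasStrictFDerivAt_equiv hf'
  exact ⟨h.toOpenPartialHomeomorph f, h.mem_toOpenPartialHomeomorph_source,
    (h.toOpenPartialHomeomorph_coe).symm⟩

section LocalHomeomorphCount

variable {X Y : Type*} [TopologicalSpace X] [TopologicalSpace Y] {f : X → Y}

theorem IsLocalHomeomorphOn.exists_open_injOn_image_open {s : Set X}
    (hf : IsLocalHomeomorphOn f s) {x : X} (hx : x ∈ s) {N : Set X} (hN : N ∈ 𝓝 x) :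
    ∃ U ⊆ N, IsOpen U ∧ x ∈ U ∧ InjOn f U ∧ IsOpen (f '' U) := by
  obtain ⟨e, hxe, rfl⟩ := hf x hx
  refine ⟨interior N ∩ e.source, inter_subset_left.trans interior_subset,
    isOpen_interior.inter e.open_source, ⟨mem_interior_iff_mem_nhds.2 hN, hxe⟩,
    e.injOn.mono inter_subset_right, e.isOpen_image_of_subset_source
      (isOpen_interior.inter e.open_source) inter_subset_right⟩

theorem IsCompact.eventually_encard_inter_preimage_eq [T2Space X] [T2Space Y] {K : Set X}
    {y₀ : Y} (hK : IsCompact K) (hf : ContinuousOn f K) (hint : K ∩ f ⁻¹' {y₀} ⊆ interior K)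
    (hloc : IsLocalHomeomorphOn f (K ∩ f ⁻¹' {y₀})) :
    ∀ᶠ y in 𝓝 y₀, (K ∩ f ⁻¹' {y}).encard = (K ∩ f ⁻¹' {y₀}).encard := by
  set T := K ∩ f ⁻¹' {y₀}
  have hTc : IsCompact T :=
    hK.of_isClosed_subset (hf.preimage_isClosed_of_isClosed hK.isClosed isClosed_singleton)
      inter_subset_left
  have hTfin : T.Finite :=
    hTc.finite <| hloc.isDiscrete_of_image
      (subsingleton_singleton.anti (image_subset_iff.2 inter_subset_right)).isDiscrete
  obtain ⟨V, hV, hVdisj⟩ := hTfin.t2_separation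
  have hW : ∀ t ∈ T, ∃ W ⊆ V t ∩ K, IsOpen W ∧ t ∈ W ∧ InjOn f W ∧ IsOpen (f '' W) :=
    fun t ht => hloc.exists_open_injOn_image_open ht
      (inter_mem ((hV t).2.mem_nhds (hV t).1) (mem_interior_iff_mem_nhds.1 (hint ht)))
  choose! W hWsub hWopen hWmem hWinj hWimage using hW
  have hWdisj : T.PairwiseDisjoint W :=
    hVdisj.mono_on fun t ht => (hWsub t ht).trans inter_subset_left
  set C := K \ ⋃ t ∈ T, W t
  have hfC : IsCompact (f '' C) :=
    (hK.diff (isOpen_biUnion hWopen)).image_of_continuousOn (hf.mono sdiff_subset)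
  have hy₀C : y₀ ∉ f '' C := by
    rintro ⟨c, ⟨hcK, hcW⟩, hc⟩
    exact hcW (mem_biUnion ⟨hcK, hc⟩ (hWmem c ⟨hcK, hc⟩))
  filter_upwards [hfC.isClosed.isOpen_compl.mem_nhds hy₀C,
    (hTfin.eventually_all).2 fun t ht => (hWimage t ht).mem_nhds ⟨t, hWmem t ht, ht.2⟩]
    with y hyC hyW
  choose! g hgW hgy using hyW
  have hg_inj : InjOn g T := fun t ht t' ht' h =>
    hWdisj.elim_set ht ht' _ (hgW t ht) (h ▸ hgW t' ht')
  have hg_image : g '' T = K ∩ f ⁻¹' {y} := by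
    refine Subset.antisymm ?_ fun s ⟨hsK, hs⟩ => ?_
    · rintro _ ⟨t, ht, rfl⟩
      exact ⟨(hWsub t ht (hgW t ht)).2, hgy t ht⟩
    · obtain ⟨t, ht, hst⟩ : ∃ t ∈ T, s ∈ W t := by
        by_contra! h
        exact hyC ⟨s, ⟨hsK, by simpa using h⟩, hs⟩
      exact ⟨t, ht, hWinj t ht (hgW t ht) hst ((hgy t ht).trans hs.symm)⟩
  rw [← hg_image, hg_inj.encard_image]

end LocalHomeomorphCount

theorem ENat.tsum_set_one {α : Type*} (s : Set α) : ∑' _ : s, (1 : ℕ∞) = s.encard := by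
  rcases s.finite_or_infinite with hs | hs
  · have := hs.fintype
    rw [tsum_fintype, Finset.sum_const, nsmul_one, Finset.card_univ,
      Set.encard_eq_coe_toFinset_card, Set.toFinset_card]
  · have := hs.to_subtype
    refine (HasSum.tsum_eq (hasSum_of_isLUB _ ⟨fun _ _ => le_top, fun b hb => ?_⟩)).trans
      hs.encard_eq.symm
    refine ENat.forall_natCast_le_iff_le.1 fun n _ => ?_
    obtain ⟨t, rfl⟩ := Infinite.exists_subset_card_eq s n
    simpa using hb ⟨t, rfl⟩

theorem Complex.cpow_ofReal_eq_norm_rpow_mul_exp {x : ℂ} (hx : x ≠ 0) (a : ℝ) :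
    x ^ (a : ℂ) = ((‖x‖ ^ a : ℝ) : ℂ) * exp (arg x * a * I) := by
  rw [cpow_def_of_ne_zero hx, log, ofReal_cpow (norm_nonneg x),
    cpow_def_of_ne_zero (by simpa using hx), ← ofReal_log (norm_nonneg x), ← exp_add]
  ring_nf

theorem Complex.re_cpow_ofReal_nonneg {a : ℝ} (ha0 : 0 ≤ a) (ha1 : a ≤ 1) {z : ℂ} (hz : 0 ≤ z.re) :
    0 ≤ (z ^ (a : ℂ)).re := by
  have harg : |arg z * a| ≤ π / 2 := by
    rw [abs_mul, abs_of_nonneg ha0]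
    nlinarith [abs_arg_le_pi_div_two_iff.2 hz, abs_nonneg (arg z)]
  rw [cpow_ofReal_re]
  exact mul_nonneg (by positivity) (Real.cos_nonneg_of_neg_pi_div_two_le_of_le
    (abs_le.1 harg).1 (abs_le.1 harg).2)

theorem Complex.re_cpow_ofReal_pos {a : ℝ} (ha0 : 0 ≤ a) (ha1 : a ≤ 1) {z : ℂ} (hz : 0 < z.re) :
    0 < (z ^ (a : ℂ)).re := by
  have harg : |arg z * a| < π / 2 := by
    rw [abs_mul, abs_of_nonneg ha0]
    nlinarith [abs_arg_lt_pi_div_two_iff.2 (Or.inl hz), abs_nonneg (arg z)]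
  rw [cpow_ofReal_re]
  exact mul_pos (Real.rpow_pos_of_pos (norm_pos_iff.2 fun h => by simp [h] at hz) _)
    (Real.cos_pos_of_mem_Ioo ⟨(abs_lt.1 harg).1, (abs_lt.1 harg).2⟩)

theorem Complex.arg_mem_Ioo_and_sine_rule {w : ℂ} {a X φ : ℝ} (ha : 0 < a) (hX : 0 < X)
    (hφ : φ ∈ Ioo 0 π) (hre : w.re = a + X * Real.cos φ) (him : w.im = X * Real.sin φ) :
    arg w ∈ Ioo 0 φ ∧ ‖w‖ * Real.sin (arg w) = X * Real.sin φ ∧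
      ‖w‖ * Real.sin (φ - arg w) = a * Real.sin φ := by
  have hsinφ : 0 < Real.sin φ := Real.sin_pos_of_pos_of_lt_pi hφ.1 hφ.2
  have h1 : ‖w‖ * Real.sin (arg w) = X * Real.sin φ := by rw [norm_mul_sin_arg, him]
  have h2 : ‖w‖ * Real.sin (φ - arg w) = a * Real.sin φ := by
    rw [Real.sin_sub]
    linear_combination Real.sin φ * norm_mul_cos_arg w - Real.cos φ * norm_mul_sin_arg w
      + Real.sin φ * hre - Real.cos φ * him
  have hw : 0 < ‖w‖ :=
    norm_pos_iff.2 fun h => (mul_pos hX hsinφ).ne' (by rw [← him, h, zero_im])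
  refine ⟨⟨?_, ?_⟩, h1, h2⟩
  · by_contra! h
    have := Real.sin_nonpos_of_nonpos_of_neg_pi_le h (neg_pi_lt_arg w).le
    nlinarith
  · by_contra! h
    have := Real.sin_nonpos_of_nonpos_of_neg_pi_le (sub_nonpos.2 h)
      (by linarith [arg_le_pi w, hφ.1])
    nlinarith

section CharacteristicFunction

variable {α β γ ω : ℝ} {s : ℂ}

theorem re_cpow_sub_pos (hω : ω < 0) (hα0 : 0 ≤ α) (hα1 : α ≤ 1) (hs : 0 ≤ s.re) :
    0 < (s ^ (α : ℂ) - ω).re := by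
  have := Complex.re_cpow_ofReal_nonneg hα0 hα1 hs
  simp only [sub_re, ofReal_re]
  linarith

theorem analyticAt_Fc (hs : s ∈ slitPlane) (hw : s ^ (α : ℂ) - ω ∈ slitPlane) :
    AnalyticAt ℂ (Fc α β γ ω) s :=
  (analyticAt_id.cpow analyticAt_const hs).mul
    (((analyticAt_id.cpow analyticAt_const hs).sub analyticAt_const).cpow analyticAt_const hw)

theorem hasStrictDerivAt_Fc (hs : s ∈ slitPlane) (hw : s ^ (α : ℂ) - ω ∈ slitPlane) :
    HasStrictDerivAt (Fc α β γ ω)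
      (Fc α β γ ω s * (β * s ^ (α : ℂ) - (β - α * γ : ℝ) * ω) / (s * (s ^ (α : ℂ) - ω))) s := by
  have hs0 := slitPlane_ne_zero hs
  have hw0 := slitPlane_ne_zero hw
  have h1 := hasStrictDerivAt_cpow_const (c := ((β - α * γ : ℝ) : ℂ)) hs
  have h2 := HasStrictDerivAt.cpow_const (c := (γ : ℂ))
    ((hasStrictDerivAt_cpow_const (c := (α : ℂ)) hs).sub_const (ω : ℂ)) hw
  refine HasStrictDerivAt.congr_deriv (f := Fc α β γ ω) (h1.mul h2) ?_
  rw [Fc, cpow_sub _ _ hs0, cpow_sub _ _ hs0, cpow_sub _ _ hw0, cpow_one, cpow_one]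
  field_simp
  push_cast
  ring

theorem exists_hasStrictDerivAt_Fc_ne_zero (hω : ω < 0) (hα0 : 0 ≤ α) (hα1 : α ≤ 1)
    (hβ : 0 < β) (hβ0 : α * γ ≤ β) (hs : 0 < s.re) :
    ∃ F' ≠ 0, HasStrictDerivAt (Fc α β γ ω) F' s := by
  have hs0 : s ≠ 0 := fun h => by simp [h] at hs
  have hw := re_cpow_sub_pos hω hα0 hα1 hs.le
  have hw0 : s ^ (α : ℂ) - ω ≠ 0 := fun h => by simp [h] at hw
  have hnum : 0 < (β * s ^ (α : ℂ) - (β - α * γ : ℝ) * ω).re := by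
    have := Complex.re_cpow_ofReal_pos hα0 hα1 hs
    simp only [sub_re, mul_re, ofReal_re, ofReal_im, zero_mul, sub_zero]
    nlinarith
  have hF : Fc α β γ ω s ≠ 0 :=
    mul_ne_zero (cpow_ne_zero_iff.2 (Or.inl hs0)) (cpow_ne_zero_iff.2 (Or.inl hw0))
  exact ⟨_, div_ne_zero (mul_ne_zero hF fun h => hnum.ne' (by rw [h, zero_re]))
      (mul_ne_zero hs0 hw0),
    hasStrictDerivAt_Fc (mem_slitPlane_iff.2 (Or.inl hs)) (mem_slitPlane_iff.2 (Or.inl hw))⟩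

theorem multAt_eq_one (hω : ω < 0) (hα0 : 0 ≤ α) (hα1 : α ≤ 1) (hβ : 0 < β)
    (hβ0 : α * γ ≤ β) (hs : 0 < s.re) {lam : ℂ} (hroot : Fc α β γ ω s = lam) :
    multAt α β γ ω lam s = 1 := by
  obtain ⟨F', hF', hF⟩ := exists_hasStrictDerivAt_Fc_ne_zero hω hα0 hα1 hβ hβ0 hs
  have hA : AnalyticAt ℂ (fun z => Fc α β γ ω z - lam) s :=
    (analyticAt_Fc (mem_slitPlane_iff.2 (Or.inl hs))
      (mem_slitPlane_iff.2 (Or.inl (re_cpow_sub_pos hω hα0 hα1 hs.le)))).sub analyticAt_const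
  rw [multAt, dif_pos hA]
  exact hA.analyticOrderAt_eq_one_of_zero_deriv_ne_zero (by simp [hroot])
    (by rwa [(hF.hasDerivAt.sub_const lam).deriv])

theorem continuousAt_Fc (hω : ω < 0) (hα0 : 0 < α) (hα1 : α ≤ 1) (hβ0 : α * γ ≤ β)
    (hs : 0 ≤ s.re) : ContinuousAt (Fc α β γ ω) s := by
  have hc : ContinuousAt (fun z : ℂ => z ^ ((β - α * γ : ℝ) : ℂ)) s := by
    rcases (sub_nonneg.2 hβ0).eq_or_lt with h | h
    · simp only [← h, ofReal_zero, cpow_zero]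
      exact continuousAt_const
    · exact continuousAt_cpow_const_of_re_pos (Or.inl hs) (by simpa using h)
  have hw : ContinuousAt (fun z : ℂ => z ^ (α : ℂ) - ω) s :=
    (continuousAt_cpow_const_of_re_pos (Or.inl hs) (by simpa using hα0)).sub continuousAt_const
  exact hc.mul (hw.cpow continuousAt_const
    (mem_slitPlane_iff.2 (Or.inl (re_cpow_sub_pos hω hα0.le hα1 hs))))

theorem Fc_conj (hs : s ∈ slitPlane) (hw : s ^ (α : ℂ) - ω ∈ slitPlane) :
    Fc α β γ ω (conj s) = conj (Fc α β γ ω s) := by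
  have hconj : ∀ z : ℂ, z ∈ slitPlane → ∀ a : ℝ, conj z ^ (a : ℂ) = conj (z ^ (a : ℂ)) :=
    fun z hz a => by rw [conj_cpow _ _ (mem_slitPlane_iff_arg.1 hz).1, conj_ofReal]
  rw [Fc, Fc, hconj s hs, hconj s hs, ← conj_ofReal ω, ← map_sub, hconj _ hw, ← map_mul,
    conj_ofReal]

theorem norm_rpow_le_norm_Fc (hω : ω < 0) (hα0 : 0 ≤ α) (hα1 : α ≤ 1) (hγ : 0 ≤ γ)
    (hβ : 0 < β) (hs : 0 ≤ s.re) : ‖s‖ ^ β ≤ ‖Fc α β γ ω s‖ := by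
  have hw : ‖s ^ (α : ℂ)‖ ≤ ‖s ^ (α : ℂ) - ω‖ := by
    have := Complex.re_cpow_ofReal_nonneg hα0 hα1 hs
    rw [← sq_le_sq₀ (norm_nonneg _) (norm_nonneg _), ← normSq_eq_norm_sq, ← normSq_eq_norm_sq,
      normSq_apply, normSq_apply]
    simp only [sub_re, sub_im, ofReal_re, ofReal_im, sub_zero]
    nlinarith
  calc ‖s‖ ^ β = ‖s‖ ^ ((β - α * γ) + α * γ) := by ring_nf
    _ = ‖s‖ ^ (β - α * γ) * ‖s ^ (α : ℂ)‖ ^ γ := by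
      rw [Real.rpow_add' (norm_nonneg _) (by simpa using hβ.ne'), Real.rpow_mul (norm_nonneg _),
        norm_cpow_real]
    _ ≤ ‖s‖ ^ (β - α * γ) * ‖s ^ (α : ℂ) - ω‖ ^ γ := by gcongr
    _ = ‖Fc α β γ ω s‖ := by rw [Fc, norm_mul, norm_cpow_real, norm_cpow_real]

theorem norm_le_norm_Fc_rpow_inv (hω : ω < 0) (hα0 : 0 ≤ α) (hα1 : α ≤ 1) (hγ : 0 ≤ γ)
    (hβ : 0 < β) (hs : 0 ≤ s.re) : ‖s‖ ≤ ‖Fc α β γ ω s‖ ^ β⁻¹ :=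
  (Real.le_rpow_inv_iff_of_pos (norm_nonneg _) (norm_nonneg _) hβ).2
    (norm_rpow_le_norm_Fc hω hα0 hα1 hγ hβ hs)

theorem Lam_modulus_of_sine_rule {θ X N : ℝ} (hX : 0 < X) (hN : 0 < N) (hω : ω ≠ 0)
    (hS : 0 < Real.sin (α * π / 2)) (h1 : N * Real.sin θ = X * Real.sin (α * π / 2))
    (h2 : N * Real.sin (α * π / 2 - θ) = |ω| * Real.sin (α * π / 2)) :
    |ω| ^ (β / α) * Real.sin θ ^ (β / α - γ) * Real.sin (α * π / 2) ^ γ *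
      Real.sin (α * π / 2 - θ) ^ (-(β / α)) = X ^ (β / α - γ) * N ^ γ := by
  set S := Real.sin (α * π / 2)
  set b := β / α
  have ha := abs_pos.2 hω
  have hSN : 0 < S / N := div_pos hS hN
  rw [eq_div_of_mul_eq hN.ne' ((mul_comm _ _).trans h1),
    eq_div_of_mul_eq hN.ne' ((mul_comm _ _).trans h2), mul_div_assoc, mul_div_assoc,
    Real.mul_rpow hX.le hSN.le, Real.mul_rpow ha.le hSN.le]
  calc |ω| ^ b * (X ^ (b - γ) * (S / N) ^ (b - γ)) * S ^ γ * (|ω| ^ (-b) * (S / N) ^ (-b))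
      = X ^ (b - γ) * (|ω| ^ (b + -b) * ((S / N) ^ (b - γ + -b) * S ^ γ)) := by
        rw [Real.rpow_add ha, Real.rpow_add hSN]
        ring
    _ = X ^ (b - γ) * N ^ γ := by
        rw [add_neg_cancel, Real.rpow_zero, show b - γ + -b = -γ by ring, Real.rpow_neg hSN.le,
          Real.div_rpow hS.le hN.le, inv_div, div_mul_cancel₀ _ (by positivity), one_mul]

theorem Fc_ofReal_mul_I_mem_PsiSet (hω : ω < 0) (hα0 : 0 < α) (hα1 : α ≤ 1) {y : ℝ}
    (hy : 0 < y) : Fc α β γ ω (y * I) ∈ PsiSet α β γ ω := by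
  have hs0 : (y : ℂ) * I ≠ 0 := by simp [hy.ne']
  have hnorm : ‖(y : ℂ) * I‖ = y := by simp [abs_of_pos hy]
  have harg : arg ((y : ℂ) * I) = π / 2 := by rw [arg_real_mul _ hy, arg_I]
  have hφ : α * π / 2 ∈ Ioo 0 π := ⟨by positivity, by nlinarith [pi_pos]⟩
  set w := ((y : ℂ) * I) ^ (α : ℂ) - ω
  have hre : w.re = |ω| + y ^ α * Real.cos (α * π / 2) := by
    simp only [w, sub_re, cpow_ofReal_re, hnorm, harg, ofReal_re, abs_of_neg hω]
    ring_nf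
  have him : w.im = y ^ α * Real.sin (α * π / 2) := by
    simp only [w, sub_im, cpow_ofReal_im, hnorm, harg, ofReal_im]
    ring_nf
  obtain ⟨hθ, h1, h2⟩ := arg_mem_Ioo_and_sine_rule (abs_pos.2 hω.ne) (by positivity) hφ hre him
  have hw0 : w ≠ 0 := fun h => by simp [h] at hθ
  have hX : (y ^ α) ^ (β / α - γ) = y ^ (β - α * γ) := by
    rw [← Real.rpow_mul hy.le]
    field_simp
  refine ⟨arg w, hθ, ?_⟩
  rw [Lam, Lam_modulus_of_sine_rule (by positivity) (norm_pos_iff.2 hw0) hω.ne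
      (Real.sin_pos_of_pos_of_lt_pi hφ.1 hφ.2) h1 h2, hX, Fc,
    cpow_ofReal_eq_norm_rpow_mul_exp hs0, cpow_ofReal_eq_norm_rpow_mul_exp hw0, hnorm, harg,
    ofReal_mul, mul_mul_mul_comm, ← Complex.exp_add]
  congr 2
  push_cast
  ring

theorem Fc_neg_ofReal_mul_I_mem_PsiBar (hω : ω < 0) (hα0 : 0 < α) (hα1 : α ≤ 1) {y : ℝ}
    (hy : 0 < y) : Fc α β γ ω (-(y * I)) ∈ PsiBar α β γ ω := by
  have hs : (y : ℂ) * I ∈ slitPlane := mem_slitPlane_iff.2 (Or.inr (by simp [hy.ne']))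
  have hw : ((y : ℂ) * I) ^ (α : ℂ) - ω ∈ slitPlane :=
    mem_slitPlane_iff.2 (Or.inl (re_cpow_sub_pos hω hα0.le hα1 (by simp)))
  show conj (Fc α β γ ω (-(y * I))) ∈ PsiSet α β γ ω
  rw [show -((y : ℂ) * I) = conj (y * I) by simp, Fc_conj hs hw, conj_conj]
  exact Fc_ofReal_mul_I_mem_PsiSet hω hα0 hα1 hy

theorem Fc_mem_closure_of_re_eq_zero (hω : ω < 0) (hα0 : 0 < α) (hα1 : α ≤ 1)
    (hβ0 : α * γ ≤ β) {s : ℂ} (hs : s.re = 0) :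
    Fc α β γ ω s ∈ closure (PsiSet α β γ ω ∪ PsiBar α β γ ω) := by
  have hs' : s = s.im * I := Complex.ext (by simp [hs]) (by simp)
  rcases lt_trichotomy s.im 0 with h | h | h
  · refine subset_closure (Or.inr ?_)
    rw [hs', show (s.im : ℂ) = -((-s.im : ℝ) : ℂ) by simp, neg_mul]
    exact Fc_neg_ofReal_mul_I_mem_PsiBar hω hα0 hα1 (neg_pos.2 h)
  · have hlim : Tendsto (fun y : ℝ => Fc α β γ ω (y * I)) (𝓝[>] 0) (𝓝 (Fc α β γ ω s)) := by
      rw [hs', h]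
      exact ((continuousAt_Fc hω hα0 hα1 hβ0 (by simp)).tendsto.comp
        ((continuous_ofReal.mul continuous_const).tendsto' 0 _ rfl)).mono_left nhdsWithin_le_nhds
    exact mem_closure_of_tendsto hlim (eventually_nhdsWithin_of_forall fun y hy =>
      Or.inl (Fc_ofReal_mul_I_mem_PsiSet hω hα0 hα1 hy))
  · exact subset_closure (Or.inl (hs' ▸ Fc_ofReal_mul_I_mem_PsiSet hω hα0 hα1 h))

theorem re_pos_of_Fc_eq (hω : ω < 0) (hα0 : 0 < α) (hα1 : α ≤ 1) (hβ0 : α * γ ≤ β)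
    {lam s : ℂ} (hcl : lam ∉ closure (PsiSet α β γ ω ∪ PsiBar α β γ ω)) (hs : 0 ≤ s.re)
    (hroot : Fc α β γ ω s = lam) : 0 < s.re :=
  hs.lt_of_ne fun h => hcl (hroot ▸ Fc_mem_closure_of_re_eq_zero hω hα0 hα1 hβ0 h.symm)

theorem isLocalHomeomorphOn_Fc (hω : ω < 0) (hα0 : 0 ≤ α) (hα1 : α ≤ 1) (hβ : 0 < β)
    (hβ0 : α * γ ≤ β) : IsLocalHomeomorphOn (Fc α β γ ω) {s | 0 < s.re} :=
  isLocalHomeomorphOn_of_hasStrictDerivAt fun _ hs =>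
    exists_hasStrictDerivAt_Fc_ne_zero hω hα0 hα1 hβ hβ0 hs

theorem Ncount_eq_encard (hω : ω < 0) (hα0 : 0 < α) (hα1 : α ≤ 1) (hγ : 0 ≤ γ) (hβ : 0 < β)
    (hβ0 : α * γ ≤ β) {lam : ℂ} (hcl : lam ∉ closure (PsiSet α β γ ω ∪ PsiBar α β γ ω))
    {R : ℝ} (hR : ‖lam‖ ^ β⁻¹ ≤ R) :
    Ncount α β γ ω lam =
      (Metric.closedBall (0 : ℂ) R ∩ {s | 0 ≤ s.re} ∩ Fc α β γ ω ⁻¹' {lam}).encard := by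
  have hroots : Metric.closedBall (0 : ℂ) R ∩ {s | 0 ≤ s.re} ∩ Fc α β γ ω ⁻¹' {lam} =
      {s | 0 ≤ s.re ∧ Fc α β γ ω s = lam} := by
    ext s
    simp only [mem_inter_iff, mem_closedBall_zero_iff, mem_ofPred_eq, mem_preimage,
      mem_singleton_iff]
    refine ⟨fun h => ⟨h.1.2, h.2⟩, fun h => ⟨⟨?_, h.1⟩, h.2⟩⟩
    calc ‖s‖ ≤ ‖Fc α β γ ω s‖ ^ β⁻¹ := norm_le_norm_Fc_rpow_inv hω hα0.le hα1 hγ hβ h.1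
      _ = ‖lam‖ ^ β⁻¹ := by rw [h.2]
      _ ≤ R := hR
  rw [hroots, ← ENat.tsum_set_one]
  exact tsum_congr fun s => multAt_eq_one hω hα0.le hα1 hβ hβ0
    (re_pos_of_Fc_eq hω hα0 hα1 hβ0 hcl s.2.1 s.2.2) s.2.2

theorem eventually_encard_halfDisc_inter_preimage_Fc_eq (hω : ω < 0) (hα0 : 0 < α)
    (hα1 : α ≤ 1) (hγ : 0 ≤ γ) (hβ : 0 < β) (hβ0 : α * γ ≤ β) {lam₀ : ℂ}
    (hcl : lam₀ ∉ closure (PsiSet α β γ ω ∪ PsiBar α β γ ω)) {R : ℝ} (hR : ‖lam₀‖ ^ β⁻¹ < R) :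
    ∀ᶠ lam in 𝓝 lam₀,
      (Metric.closedBall (0 : ℂ) R ∩ {s | 0 ≤ s.re} ∩ Fc α β γ ω ⁻¹' {lam}).encard =
        (Metric.closedBall (0 : ℂ) R ∩ {s | 0 ≤ s.re} ∩ Fc α β γ ω ⁻¹' {lam₀}).encard := by
  have hroots : Metric.closedBall (0 : ℂ) R ∩ {s | 0 ≤ s.re} ∩ Fc α β γ ω ⁻¹' {lam₀} ⊆
      Metric.ball 0 R ∩ {s | 0 < s.re} := fun t ⟨⟨_, ht⟩, hroot⟩ =>
    ⟨mem_ball_zero_iff.2 <|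
      (norm_le_norm_Fc_rpow_inv hω hα0.le hα1 hγ hβ ht).trans_lt (hroot ▸ hR),
      re_pos_of_Fc_eq hω hα0 hα1 hβ0 hcl ht hroot⟩
  have hopen : Metric.ball 0 R ∩ {s | 0 < s.re} ⊆
      interior (Metric.closedBall (0 : ℂ) R ∩ {s | 0 ≤ s.re}) :=
    interior_maximal (inter_subset_inter Metric.ball_subset_closedBall
      fun s (hs : 0 < s.re) => hs.le) (Metric.isOpen_ball.inter (isOpen_lt continuous_const
      continuous_re))
  exact ((isCompact_closedBall 0 R).inter_right
      (isClosed_le continuous_const continuous_re)).eventually_encard_inter_preimage_eq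
    (fun s hs => (continuousAt_Fc hω hα0 hα1 hβ0 hs.2).continuousWithinAt)
    (hroots.trans hopen)
    ((isLocalHomeomorphOn_Fc hω hα0.le hα1 hβ hβ0).mono (hroots.trans inter_subset_right))

end CharacteristicFunction

theorem unstable_root_count_locally_constant_general (α β γ ω : ℝ) (hω : ω < 0) (hα0 : 0 < α)
    (hα1 : α ≤ 1) (hαγ : 0 < α * γ) (hβ0 : α * γ ≤ β)
    (lam₀ : ℂ)
    (hcl : lam₀ ∉ closure (PsiSet α β γ ω ∪ PsiBar α β γ ω)) :
    ∃ r > 0, ∀ lam : ℂ, ‖lam - lam₀‖ < r →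
      Ncount α β γ ω lam = Ncount α β γ ω lam₀ := by
  have hγ : 0 ≤ γ := (pos_of_mul_pos_right hαγ hα0.le).le
  have hβ : 0 < β := hαγ.trans_le hβ0
  set R := (‖lam₀‖ + 1) ^ β⁻¹ + 1
  have hR : ∀ lam : ℂ, ‖lam‖ ≤ ‖lam₀‖ + 1 → ‖lam‖ ^ β⁻¹ < R := fun lam h =>
    (Real.rpow_le_rpow (norm_nonneg _) h (inv_nonneg.2 hβ.le)).trans_lt (lt_add_one _)
  have hnear : ∀ᶠ lam in 𝓝 lam₀,
      lam ∉ closure (PsiSet α β γ ω ∪ PsiBar α β γ ω) ∧ ‖lam‖ ≤ ‖lam₀‖ + 1 :=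
    Filter.Eventually.and (isClosed_closure.isOpen_compl.mem_nhds hcl)
      ((continuous_norm.tendsto lam₀).eventually (eventually_le_nhds (lt_add_one _)))
  obtain ⟨r, hr, h⟩ := Metric.eventually_nhds_iff.1 <|
    (eventually_encard_halfDisc_inter_preimage_Fc_eq hω hα0 hα1 hγ hβ hβ0 hcl
      (hR lam₀ (by simp))).and hnear
  refine ⟨r, hr, fun lam hlam => ?_⟩
  obtain ⟨hcount, hlcl, hlnorm⟩ := h (by rwa [dist_eq_norm])
  rw [Ncount_eq_encard hω hα0 hα1 hγ hβ hβ0 hlcl (hR lam hlnorm).le,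
    Ncount_eq_encard hω hα0 hα1 hγ hβ hβ0 hcl (hR lam₀ (by simp)).le, hcount]

theorem unstable_root_count_locally_constant (α β γ ω : ℝ) (hω : ω < 0) (hα0 : 0 < α)
    (hα1 : α ≤ 1) (hαγ : 0 < α * γ) (hβ0 : α * γ ≤ β) (hβ1 : β ≤ 1)
    (lam₀ : ℂ) (hlam₀ : lam₀ ≠ 0)
    (hcl : lam₀ ∉ closure (PsiSet α β γ ω ∪ PsiBar α β γ ω)) :
    ∃ r > 0, ∀ lam : ℂ, ‖lam - lam₀‖ < r →
      Ncount α β γ ω lam = Ncount α β γ ω lam₀ :=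
  unstable_root_count_locally_constant_general α β γ ω hω hα0 hα1 hαγ hβ0 lam₀ hcl
end

section
/- Let ω < 0, 0 < α ≤ 1 and 0 < αγ ≤ β ≤ 1. For every θ ∈ (0, απ/2), setting μ(θ) = (|ω| sin θ / sin(απ/2 − θ))^(1/α), the function F is complex-differentiable at the point i·μ(θ) with derivative F′(i·μ(θ)) = −i·μ(θ)^(−1)·[β − αγ·(sin(απ/2 − θ)/sin(απ/2))·exp(−iθ)]·Λ(θ). -/
open Real Complex Filter Set Topology

/-! Put z = iμ and φ = απ/2. Then z^α = μ^α e^{iφ}, and μ is chosen so that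
z^α - ω = ρ e^{iθ} with ρ = |ω| sin φ / sin(φ - θ): this is the identity
sin θ e^{iφ} + sin(φ - θ) = sin φ e^{iθ}. Hence z and z^α - ω lie in the slit plane, where
F'/F = ((β - αγ) + αγ z^α / (z^α - ω)) / z, and F(z) = μ^(β-αγ) ρ^γ e^{i(γθ + (β-αγ)π/2)} = Λ(θ).
Finally z^α / (z^α - ω) = 1 + ω / (ρ e^{iθ}) = 1 - (sin(φ - θ) / sin φ) e^{-iθ}. -/

theorem ofReal_mul_exp_mul_I_cpow {r t : ℝ} (hr : 0 < r) (ht : t ∈ Ioc (-π) π) (c : ℝ) :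
    ((r : ℂ) * exp (t * I)) ^ (c : ℂ) = ((r ^ c : ℝ) : ℂ) * exp ((c * t : ℝ) * I) := by
  have hlog : log (exp (t * I)) = t * I := log_exp (by simpa using ht.1) (by simpa using ht.2)
  rw [cpow_def_of_ne_zero (mul_ne_zero (ofReal_ne_zero.2 hr.ne') (exp_ne_zero _)),
    log_ofReal_mul hr (exp_ne_zero _), hlog, add_mul, Complex.exp_add, Real.rpow_def_of_pos hr,
    ofReal_exp]
  push_cast
  ring_nf

theorem I_mul_ofReal_cpow {μ : ℝ} (hμ : 0 < μ) (c : ℝ) :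
    (I * μ) ^ (c : ℂ) = ((μ ^ c : ℝ) : ℂ) * exp ((c * (π / 2) : ℝ) * I) := by
  have hI : I * μ = μ * exp ((π / 2 : ℝ) * I) := by
    rw [exp_mul_I, ← ofReal_cos, ← ofReal_sin, Real.cos_pi_div_two, Real.sin_pi_div_two]
    push_cast
    ring
  rw [hI, ofReal_mul_exp_mul_I_cpow hμ ⟨by linarith [pi_pos], by linarith [pi_pos]⟩]

theorem sin_mul_exp_add_sin_sub (θ φ : ℝ) :
    (Real.sin θ : ℂ) * exp (φ * I) + (Real.sin (φ - θ) : ℂ) = (Real.sin φ : ℂ) * exp (θ * I) := by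
  rw [exp_mul_I, exp_mul_I, ← ofReal_cos, ← ofReal_sin, ← ofReal_cos, ← ofReal_sin,
    Real.sin_sub]
  push_cast
  ring

theorem hasDerivAt_cpow_mul_cpow_sub_const_cpow {a b g c z : ℂ} (hz : z ∈ slitPlane)
    (hw : z ^ a - c ∈ slitPlane) :
    HasDerivAt (fun s => s ^ b * (s ^ a - c) ^ g)
      (z ^ b * (z ^ a - c) ^ g * (b + a * g * (z ^ a / (z ^ a - c))) / z) z := by
  have hpow : HasDerivAt (fun s : ℂ => s ^ a) (a * z ^ (a - 1)) z := by
    simpa using (hasDerivAt_id z).cpow_const (c := a) hz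
  have hprod := ((hasDerivAt_id z).cpow_const (c := b) hz).fun_mul
    ((hpow.sub_const c).cpow_const (c := g) hw)
  refine hprod.congr_deriv ?_
  have hz0 := slitPlane_ne_zero hz
  have hw0 := slitPlane_ne_zero hw
  simp only [id, cpow_sub _ _ hz0, cpow_sub _ _ hw0, cpow_one]
  field_simp

section

variable {α ω θ : ℝ} (hω : ω < 0) (hθ : 0 < θ) (hθφ : θ < α * π / 2) (hφ : α * π / 2 < π)
include hθ hθφ hφ

theorem sin_pos_and_sin_pos_and_sin_sub_pos :
    0 < Real.sin θ ∧ 0 < Real.sin (α * π / 2) ∧ 0 < Real.sin (α * π / 2 - θ) :=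
  ⟨sin_pos_of_pos_of_lt_pi hθ (by linarith), sin_pos_of_pos_of_lt_pi (by linarith) hφ,
    sin_pos_of_pos_of_lt_pi (by linarith) (by linarith)⟩

include hω

theorem muP_pos : 0 < muP α ω θ := by
  obtain ⟨hs, -, hs'⟩ := sin_pos_and_sin_pos_and_sin_sub_pos hθ hθφ hφ
  exact rpow_pos_of_pos (div_pos (mul_pos (abs_pos.2 hω.ne) hs) hs') _

theorem rhoP_pos : 0 < rhoP α ω θ := by
  obtain ⟨-, hs, hs'⟩ := sin_pos_and_sin_pos_and_sin_sub_pos hθ hθφ hφ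
  exact div_pos (mul_pos (abs_pos.2 hω.ne) hs) hs'

theorem muP_rpow :
    muP α ω θ ^ α = |ω| * Real.sin θ / Real.sin (α * π / 2 - θ) := by
  obtain ⟨hs, -, hs'⟩ := sin_pos_and_sin_pos_and_sin_sub_pos hθ hθφ hφ
  have hα : α ≠ 0 := by rintro rfl; linarith
  rw [muP, one_div, rpow_inv_rpow (div_pos (mul_pos (abs_pos.2 hω.ne) hs) hs').le hα]

theorem I_mul_muP_cpow_sub :
    (I * muP α ω θ) ^ (α : ℂ) - ω = rhoP α ω θ * exp (θ * I) := by
  obtain ⟨-, -, hs'⟩ := sin_pos_and_sin_pos_and_sin_sub_pos hθ hθφ hφ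
  have hs'C : (Real.sin (α * π / 2 - θ) : ℂ) ≠ 0 := ofReal_ne_zero.2 hs'.ne'
  rw [I_mul_ofReal_cpow (muP_pos hω hθ hθφ hφ), muP_rpow hω hθ hθφ hφ, rhoP,
    show ω = -|ω| by rw [abs_of_neg hω, neg_neg], abs_neg, abs_abs, ← mul_div_assoc]
  have key := sin_mul_exp_add_sin_sub θ (α * π / 2)
  generalize exp ((α * π / 2 : ℝ) * I) = eφ at key ⊢
  generalize Real.sin (α * π / 2 - θ) = s at key hs'C ⊢
  simp only [ofReal_mul, ofReal_div, ofReal_neg]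
  field_simp
  linear_combination ((|ω| : ℝ) : ℂ) * key

theorem muP_rpow_mul_rhoP_rpow (β γ : ℝ) :
    muP α ω θ ^ (β - α * γ) * rhoP α ω θ ^ γ =
      |ω| ^ (β / α) * Real.sin θ ^ (β / α - γ) * Real.sin (α * π / 2) ^ γ *
        Real.sin (α * π / 2 - θ) ^ (-(β / α)) := by
  obtain ⟨hs, hsφ, hs'⟩ := sin_pos_and_sin_pos_and_sin_sub_pos hθ hθφ hφ
  have hα : α ≠ 0 := by rintro rfl; linarith
  have hω' : 0 < |ω| := abs_pos.2 hω.ne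
  have habs : |ω| ^ (β / α) = |ω| ^ (β / α - γ) * |ω| ^ γ := by
    rw [← rpow_add hω', sub_add_cancel]
  have hsin : Real.sin (α * π / 2 - θ) ^ (-(β / α)) =
      (Real.sin (α * π / 2 - θ) ^ (β / α - γ) * Real.sin (α * π / 2 - θ) ^ γ)⁻¹ := by
    rw [← rpow_add hs', sub_add_cancel, rpow_neg hs'.le]
  rw [muP, ← rpow_mul (div_pos (mul_pos hω' hs) hs').le,
    show 1 / α * (β - α * γ) = β / α - γ by field_simp, rhoP,
    div_rpow (mul_pos hω' hs).le hs'.le, div_rpow (mul_pos hω' hsφ).le hs'.le,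
    mul_rpow hω'.le hs.le, mul_rpow hω'.le hsφ.le, habs, hsin]
  field_simp

theorem Fc_I_mul_muP (β γ : ℝ) : Fc α β γ ω (I * muP α ω θ) = Lam α β γ ω θ := by
  rw [Fc, I_mul_muP_cpow_sub hω hθ hθφ hφ, I_mul_ofReal_cpow (muP_pos hω hθ hθφ hφ),
    ofReal_mul_exp_mul_I_cpow (rhoP_pos hω hθ hθφ hφ) ⟨by linarith, by linarith⟩, Lam,
    ← muP_rpow_mul_rhoP_rpow hω hθ hθφ hφ, mul_mul_mul_comm, ← Complex.exp_add]
  push_cast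
  ring_nf

theorem I_mul_muP_cpow_div_cpow_sub :
    (I * muP α ω θ) ^ (α : ℂ) / ((I * muP α ω θ) ^ (α : ℂ) - ω) =
      1 - ((Real.sin (α * π / 2 - θ) / Real.sin (α * π / 2) : ℝ) : ℂ) * exp (-(I * θ)) := by
  obtain ⟨-, hsφ, hs'⟩ := sin_pos_and_sin_pos_and_sin_sub_pos hθ hθφ hφ
  have hωC : (ω : ℂ) = -((|ω| : ℝ) : ℂ) := by rw [abs_of_neg hω, ofReal_neg, neg_neg]
  have hω' : ((|ω| : ℝ) : ℂ) ≠ 0 := ofReal_ne_zero.2 (abs_pos.2 hω.ne).ne'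
  have hs'C : (Real.sin (α * π / 2 - θ) : ℂ) ≠ 0 := ofReal_ne_zero.2 hs'.ne'
  have hsφC : (Real.sin (α * π / 2) : ℂ) ≠ 0 := ofReal_ne_zero.2 hsφ.ne'
  have he : exp (θ * I) ≠ 0 := exp_ne_zero _
  rw [eq_add_of_sub_eq (I_mul_muP_cpow_sub hω hθ hθφ hφ), add_sub_cancel_right, rhoP, hωC,
    Complex.exp_neg, mul_comm I (θ : ℂ)]
  generalize Real.sin (α * π / 2 - θ) = s at hs'C ⊢
  generalize Real.sin (α * π / 2) = t at hsφC ⊢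
  generalize exp (θ * I) = e at he ⊢
  push_cast
  field_simp
  ring

end

theorem F_hasDerivAt_imaginary_root_general (α β γ ω : ℝ) (hω : ω < 0) (hα1 : α ≤ 1) :
    ∀ θ ∈ Set.Ioo 0 (α * π / 2),
      HasDerivAt (Fc α β γ ω)
        (-Complex.I * ((muP α ω θ : ℂ))⁻¹ *
          (((β : ℝ) : ℂ) - ((α * γ : ℝ) : ℂ) *
            ((Real.sin (α * π / 2 - θ) / Real.sin (α * π / 2) : ℝ) : ℂ) *
            Complex.exp (-(Complex.I * (θ : ℂ)))) *
          Lam α β γ ω θ)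
        (Complex.I * (muP α ω θ : ℂ)) := by
  rintro θ ⟨hθ, hθφ⟩
  have hφ : α * π / 2 < π := by nlinarith [pi_pos]
  have hμ := muP_pos hω hθ hθφ hφ
  have hz : I * muP α ω θ ∈ slitPlane := mem_slitPlane_iff.2 (Or.inr (by simpa using hμ.ne'))
  have hw : (I * muP α ω θ) ^ (α : ℂ) - ω ∈ slitPlane := by
    rw [I_mul_muP_cpow_sub hω hθ hθφ hφ]
    refine mem_slitPlane_iff.2 (Or.inr ?_)
    have hs := (sin_pos_and_sin_pos_and_sin_sub_pos hθ hθφ hφ).1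
    simpa [exp_ofReal_mul_I_im] using (mul_pos (rhoP_pos hω hθ hθφ hφ) hs).ne'
  refine (hasDerivAt_cpow_mul_cpow_sub_const_cpow hz hw).congr_deriv ?_
  change Fc α β γ ω (I * muP α ω θ) * _ / _ = _
  rw [Fc_I_mul_muP hω hθ hθφ hφ, I_mul_muP_cpow_div_cpow_sub hω hθ hθφ hφ,
    div_eq_mul_inv _ (I * _), mul_inv, inv_I]
  push_cast
  ring

theorem F_hasDerivAt_imaginary_root (α β γ ω : ℝ) (hω : ω < 0) (hα0 : 0 < α) (hα1 : α ≤ 1)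
    (hαγ : 0 < α * γ) (hβ0 : α * γ ≤ β) (hβ1 : β ≤ 1) :
    ∀ θ ∈ Set.Ioo 0 (α * π / 2),
      HasDerivAt (Fc α β γ ω)
        (-Complex.I * ((muP α ω θ : ℂ))⁻¹ *
          (((β : ℝ) : ℂ) - ((α * γ : ℝ) : ℂ) *
            ((Real.sin (α * π / 2 - θ) / Real.sin (α * π / 2) : ℝ) : ℂ) *
            Complex.exp (-(Complex.I * (θ : ℂ)))) *
          Lam α β γ ω θ)
        (Complex.I * (muP α ω θ : ℂ)) :=
  F_hasDerivAt_imaginary_root_general α β γ ω hω hα1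
end
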